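/- arXiv:2307.13866 — 3 statements merged into one kernel-verified Lean document; each statement's English description precedes it below -/
import Mathlib

section
/- Let A be a bicomplete abelian category. A map p : E \to B in Ch_{\geq 0}(A) is a fibration in the Hurewicz model structure (i.e. a degreewise split epimorphism in all positive degrees) if and only if it satisfies the homotopy lifting property: for every complex X, every map f : X \to E, and every chain homotopy H : X \otimes I \to B with H \circ i_0 = p \circ f, there exists a chain homotopy \tilde{H} : X \otimes I \to E with \tilde{H} \circ i_0 = f and p \circ \tilde{H} = H. -/
/-!
Sections `s` of `p` in every degree `j` that is the source of a differential lift a homotopy `H`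
componentwise to `H ≫ s`, and the other end of the lifted homotopy is then forced to be `f` minus
the null-homotopic map of the lift. Conversely, for `c.Rel j i`, lifting the homotopy out of the
complex `B_j` concentrated in degree `i` whose only component is `𝟙 : B_j ⟶ B_j` yields a section
of `p_j`.
-/

open CategoryTheory Limits

universe v u

variable {V : Type*} [Category V] [Preadditive V] {ι : Type*} {c : ComplexShape ι}
  {X E B : HomologicalComplex V c}

def HasHomotopyLiftingProperty (p : E ⟶ B) : Prop :=
  ∀ (X : HomologicalComplex V c) (f : X ⟶ E) (g : X ⟶ B) (H : Homotopy (f ≫ p) g),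
    ∃ (f' : X ⟶ E) (H' : Homotopy f f'), f' ≫ p = g ∧ ∀ j k, H'.hom j k ≫ p.f k = H.hom j k

namespace Homotopy

@[simps]
def toSubNullHomotopicMap (f : X ⟶ E) (hom : ∀ i j, X.X i ⟶ E.X j)
    (zero : ∀ i j, ¬c.Rel j i → hom i j = 0) : Homotopy f (f - nullHomotopicMap hom) where
  hom := hom
  zero := zero
  comm i := by simp [nullHomotopicMap]

theorem eq_sub_nullHomotopicMap {f g : X ⟶ B} (H : Homotopy f g) :
    g = f - nullHomotopicMap H.hom := by
  ext i
  simp [H.comm i, nullHomotopicMap]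

theorem exists_lift_of_hom_lift {f : X ⟶ E} {p : E ⟶ B} {g : X ⟶ B} (H : Homotopy (f ≫ p) g)
    (hom : ∀ i j, X.X i ⟶ E.X j) (zero : ∀ i j, ¬c.Rel j i → hom i j = 0)
    (hom_comp : ∀ i j, hom i j ≫ p.f j = H.hom i j) :
    ∃ (f' : X ⟶ E) (H' : Homotopy f f'), f' ≫ p = g ∧ ∀ j k, H'.hom j k ≫ p.f k = H.hom j k := by
  refine ⟨_, toSubNullHomotopicMap f hom zero, ?_, hom_comp⟩
  rw [Preadditive.sub_comp, nullHomotopicMap_comp, H.eq_sub_nullHomotopicMap]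
  simp only [hom_comp]

end Homotopy

theorem hasHomotopyLiftingProperty_of_exists_section {p : E ⟶ B}
    (hs : ∀ i j, c.Rel j i → ∃ s : B.X j ⟶ E.X j, s ≫ p.f j = 𝟙 (B.X j)) :
    HasHomotopyLiftingProperty p := by
  classical
  intro X f g H
  choose s hs using hs
  refine H.exists_lift_of_hom_lift
    (fun i j => if hij : c.Rel j i then H.hom i j ≫ s i j hij else 0)
    (fun i j hij => dif_neg hij) fun i j => ?_
  by_cases hij : c.Rel j i
  · simp [hij, hs]
  · simp [hij, H.zero i j hij]

theorem HasHomotopyLiftingProperty.exists_section [HasZeroObject V] {p : E ⟶ B}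
    (hp : HasHomotopyLiftingProperty p) {i j : ι} (hij : c.Rel j i) :
    ∃ s : B.X j ⟶ E.X j, s ≫ p.f j = 𝟙 (B.X j) := by
  classical
  let X := (HomologicalComplex.single V c i).obj (B.X j)
  let hom : ∀ k l, X.X k ⟶ B.X l := fun k l =>
    if h : k = i ∧ l = j then
      (HomologicalComplex.singleObjXIsoOfEq c i _ k h.1).hom ≫ (B.XIsoOfEq h.2).inv
    else 0
  have zero : ∀ k l, ¬c.Rel l k → hom k l = 0 := by
    rintro k l hkl
    exact dif_neg (by rintro ⟨rfl, rfl⟩; exact hkl hij)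
  obtain ⟨f', H', -, hH'⟩ := hp X 0 _ (Homotopy.toSubNullHomotopicMap (0 ≫ p) hom zero)
  refine ⟨(HomologicalComplex.singleObjXSelf c i _).inv ≫ H'.hom i j, ?_⟩
  rw [Category.assoc, hH']
  simp [hom, HomologicalComplex.singleObjXSelf]

theorem hasHomotopyLiftingProperty_iff_exists_section [HasZeroObject V] (p : E ⟶ B) :
    HasHomotopyLiftingProperty p ↔
      ∀ i j, c.Rel j i → ∃ s : B.X j ⟶ E.X j, s ≫ p.f j = 𝟙 (B.X j) :=
  ⟨fun hp _ _ => hp.exists_section, hasHomotopyLiftingProperty_of_exists_section⟩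

theorem hurewicz_fibration_iff_homotopy_lifting_property_general
    {𝒜 : Type u} [Category.{v} 𝒜] [Abelian 𝒜]
    {E B : ChainComplex 𝒜 ℕ} (p : E ⟶ B) :
    (∀ n : ℕ, 0 < n → ∃ s : B.X n ⟶ E.X n, s ≫ p.f n = 𝟙 (B.X n)) ↔
      (∀ (X : ChainComplex 𝒜 ℕ) (f : X ⟶ E) (g : X ⟶ B)
        (H : Homotopy (f ≫ p) g),
        ∃ (f' : X ⟶ E) (H' : Homotopy f f'),
          f' ≫ p = g ∧
          ∀ j k : ℕ, H'.hom j k ≫ p.f k = H.hom j k) := by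
  refine Iff.trans ?_ (hasHomotopyLiftingProperty_iff_exists_section p).symm
  constructor
  · rintro hs i _ rfl
    exact hs _ i.succ_pos
  · intro hs n hn
    obtain ⟨m, rfl⟩ := Nat.exists_eq_add_one_of_ne_zero hn.ne'
    exact hs m _ rfl

/-- A map `p : E ⟶ B` of non-negatively graded chain complexes over a
bicomplete abelian category is a fibration in the Hurewicz model structure
(i.e. a degreewise split epimorphism in all positive degrees) if and only if
it satisfies the homotopy lifting property: for every complex `X`, every map
`f : X ⟶ E` and every chain homotopy `H` starting at `p ∘ f`, there is a
chain homotopy `H̃` starting at `f` with `p ∘ H̃ = H`. -/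
theorem hurewicz_fibration_iff_homotopy_lifting_property
    {𝒜 : Type u} [Category.{v} 𝒜] [Abelian 𝒜] [HasLimits 𝒜] [HasColimits 𝒜]
    {E B : ChainComplex 𝒜 ℕ} (p : E ⟶ B) :
    (∀ n : ℕ, 0 < n → ∃ s : B.X n ⟶ E.X n, s ≫ p.f n = 𝟙 (B.X n)) ↔
      (∀ (X : ChainComplex 𝒜 ℕ) (f : X ⟶ E) (g : X ⟶ B)
        (H : Homotopy (f ≫ p) g),
        ∃ (f' : X ⟶ E) (H' : Homotopy f f'),
          f' ≫ p = g ∧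
          ∀ j k : ℕ, H'.hom j k ≫ p.f k = H.hom j k) :=
  hurewicz_fibration_iff_homotopy_lifting_property_general p
end

section
/- In Ch_{\geq 0}(R) (or in Ch(R)), if a chain map f is a cofibration in the projective (Quillen) model structure and is also a quasi-isomorphism, then f is a chain homotopy equivalence. -/
/-!
The cokernel `K` of `f` is acyclic by the long exact homology sequence, and it is a bounded-below
complex of projectives, hence contractible. Transport a contraction `h` of `K` to `Y` along the
projection `p : Y ⟶ K` and degreewise sections `s` of `p`: the null-homotopic endomorphism `N`
of `Y` with homotopy `p ≫ h ≫ s` kills `f` and satisfies `N ≫ p = p`. So `𝟙 - N`, which is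
homotopic to `𝟙`, vanishes on `K` and hence factors through `f` using the degreewise
retractions `r` of `f`; this factorization is the homotopy inverse.
-/

open CategoryTheory CategoryTheory.Limits

universe u

/-- A chain map is a chain homotopy equivalence if it admits an inverse up to
chain homotopy. -/
def IsChainHomotopyEquiv {R : Type u} [Ring R]
    {X Y : ChainComplex (ModuleCat.{u} R) ℕ} (f : X ⟶ Y) : Prop :=
  ∃ g : Y ⟶ X, Nonempty (Homotopy (f ≫ g) (𝟙 X)) ∧ Nonempty (Homotopy (g ≫ f) (𝟙 Y))

namespace HomologicalComplex

variable {C : Type*} [Category* C] [Preadditive C] {ι : Type*} {c : ComplexShape ι}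

section

variable {X Y K : HomologicalComplex C c} (p : Y ⟶ K) (s : ∀ i, K.X i ⟶ Y.X i)
  (H : Homotopy (𝟙 K) 0)

noncomputable def nullHomotopicMapOfContraction : Y ⟶ Y :=
  Homotopy.nullHomotopicMap fun i j => p.f i ≫ H.hom i j ≫ s j

noncomputable def nullHomotopyOfContraction :
    Homotopy (nullHomotopicMapOfContraction p s H) 0 :=
  Homotopy.nullHomotopy _ fun i j hij => by rw [H.zero i j hij, zero_comp, comp_zero]

lemma comp_nullHomotopicMapOfContraction {f : X ⟶ Y} (hfp : f ≫ p = 0) :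
    f ≫ nullHomotopicMapOfContraction p s H = 0 := by
  have hfp_f (i : ι) : f.f i ≫ p.f i = 0 := by rw [← comp_f, hfp, zero_f]
  rw [nullHomotopicMapOfContraction, Homotopy.comp_nullHomotopicMap]
  simp only [reassoc_of% hfp_f, zero_comp]
  ext i
  simp [Homotopy.nullHomotopicMap, dNext, prevD]

lemma nullHomotopicMapOfContraction_comp (hs : ∀ i, s i ≫ p.f i = 𝟙 _) :
    nullHomotopicMapOfContraction p s H ≫ p = p := by
  have hH : Homotopy.nullHomotopicMap H.hom = 𝟙 K := by
    ext i; simpa [Homotopy.nullHomotopicMap] using (H.comm i).symm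
  rw [nullHomotopicMapOfContraction, Homotopy.nullHomotopicMap_comp]
  simp only [Category.assoc, hs, Category.comp_id]
  rw [← Homotopy.comp_nullHomotopicMap, hH, Category.comp_id]

end

section

variable {X Y K : HomologicalComplex C c} {f : X ⟶ Y} {p : Y ⟶ K}
  {r : ∀ i, Y.X i ⟶ X.X i} {s : ∀ i, K.X i ⟶ Y.X i}

lemma id_sub_nullHomotopicMapOfContraction_f_r_f (s_p : ∀ i, s i ≫ p.f i = 𝟙 _)
    (r_f : ∀ i, r i ≫ f.f i = 𝟙 _ - p.f i ≫ s i) (H : Homotopy (𝟙 K) 0) (i : ι) :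
    ((𝟙 Y - nullHomotopicMapOfContraction p s H).f i ≫ r i) ≫ f.f i =
      (𝟙 Y - nullHomotopicMapOfContraction p s H).f i := by
  have hp : (𝟙 Y - nullHomotopicMapOfContraction p s H) ≫ p = 0 := by
    simp [nullHomotopicMapOfContraction_comp p s H s_p]
  rw [Category.assoc, r_f, Preadditive.comp_sub, ← Category.assoc, ← comp_f, hp]
  simp

variable (f_r : ∀ i, f.f i ≫ r i = 𝟙 _) (s_p : ∀ i, s i ≫ p.f i = 𝟙 _)
  (r_f : ∀ i, r i ≫ f.f i = 𝟙 _ - p.f i ≫ s i) (H : Homotopy (𝟙 K) 0)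

noncomputable def homotopyInvOfDegreewiseSplit : Y ⟶ X where
  f i := (𝟙 Y - nullHomotopicMapOfContraction p s H).f i ≫ r i
  comm' i j _ := by
    have : IsSplitMono (f.f j) := .mk' ⟨r j, f_r j⟩
    rw [← cancel_mono (f.f j), Category.assoc, ← f.comm, ← Category.assoc,
      id_sub_nullHomotopicMapOfContraction_f_r_f s_p r_f, Category.assoc,
      id_sub_nullHomotopicMapOfContraction_f_r_f s_p r_f, Hom.comm]

lemma comp_homotopyInvOfDegreewiseSplit (w : f ≫ p = 0) :
    f ≫ homotopyInvOfDegreewiseSplit f_r s_p r_f H = 𝟙 X := by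
  ext i
  rw [comp_f, homotopyInvOfDegreewiseSplit, ← Category.assoc, ← comp_f, Preadditive.comp_sub,
    comp_nullHomotopicMapOfContraction p s H w]
  simpa using f_r i

lemma homotopyInvOfDegreewiseSplit_comp :
    homotopyInvOfDegreewiseSplit f_r s_p r_f H ≫ f =
      𝟙 Y - nullHomotopicMapOfContraction p s H := by
  ext i
  exact id_sub_nullHomotopicMapOfContraction_f_r_f s_p r_f H i

end

end HomologicalComplex

namespace HomotopyEquiv

open HomologicalComplex

variable {C : Type*} [Category* C] [Preadditive C] {ι : Type*} {c : ComplexShape ι}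
  {X Y K : HomologicalComplex C c} {f : X ⟶ Y} {p : Y ⟶ K}
  {r : ∀ i, Y.X i ⟶ X.X i} {s : ∀ i, K.X i ⟶ Y.X i}

noncomputable def ofDegreewiseSplit (w : f ≫ p = 0) (f_r : ∀ i, f.f i ≫ r i = 𝟙 _)
    (s_p : ∀ i, s i ≫ p.f i = 𝟙 _) (r_f : ∀ i, r i ≫ f.f i = 𝟙 _ - p.f i ≫ s i)
    (H : Homotopy (𝟙 K) 0) : HomotopyEquiv X Y where
  hom := f
  inv := homotopyInvOfDegreewiseSplit f_r s_p r_f H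
  homotopyHomInvId := .ofEq (comp_homotopyInvOfDegreewiseSplit f_r s_p r_f H w)
  homotopyInvHomId := (Homotopy.ofEq (homotopyInvOfDegreewiseSplit_comp f_r s_p r_f H)).trans
    (Homotopy.equivSubZero.symm
      ((Homotopy.ofEq (sub_sub_cancel _ _)).trans (nullHomotopyOfContraction p s H))).symm

end HomotopyEquiv

namespace ChainComplex

open ZeroObject

variable {C : Type*} [Category* C] [Abelian C]

lemma nonempty_homotopy_id_zero_of_acyclic {K : ChainComplex C ℕ} [∀ n, Projective (K.X n)]
    (hK : K.Acyclic) : Nonempty (Homotopy (𝟙 K) 0) := by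
  have hzero : IsZero (0 : ChainComplex C ℕ) := isZero_zero _
  have (n : ℕ) : Projective ((0 : ChainComplex C ℕ).X n) :=
    ((HomologicalComplex.eval C _ n).map_isZero hzero).projective
  have : QuasiIso (0 : K ⟶ 0) := (quasiIso_iff _).2 fun n =>
    (quasiIsoAt_iff_exactAt' _ n (HomologicalComplex.acyclic_of_isZero _ hzero n)).2 (hK n)
  obtain ⟨e, he⟩ := (quasiIso_iff_of_projective (0 : K ⟶ 0)).1 this
  exact ⟨e.homotopyHomInvId.symm.trans (.ofEq (by simp [he]))⟩

end ChainComplex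

/-- In `Ch_{≥0}(R)`, if a chain map `f` is a cofibration in the projective
(Quillen) model structure — a degreewise split monomorphism with degreewise
projective cokernel — and a quasi-isomorphism, then `f` is a chain homotopy
equivalence. -/
theorem quillen_trivial_cofibration_is_chain_homotopy_equivalence
    {R : Type u} [Ring R] {X Y : ChainComplex (ModuleCat.{u} R) ℕ} (f : X ⟶ Y)
    (hsplit : ∀ n : ℕ, ∃ r : Y.X n ⟶ X.X n, f.f n ≫ r = 𝟙 (X.X n))
    (hproj : ∀ n : ℕ, Projective (cokernel (f.f n)))
    (hqis : QuasiIso f) :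
    IsChainHomotopyEquiv f := by
  choose r f_r using hsplit
  have : Mono f :=
    HomologicalComplex.mono_of_mono_f _ fun n => (IsSplitMono.mk' ⟨r n, f_r n⟩).mono
  let S := ShortComplex.mk f (cokernel.π f) (cokernel.condition f)
  have hS : S.ShortExact := { exact := S.exact_of_g_is_cokernel (cokernelIsCokernel f) }
  have (n : ℕ) : Projective ((cokernel f).X n) :=
    (hproj n).of_iso (PreservesCokernel.iso (HomologicalComplex.eval _ _ n) f).symm
  obtain ⟨H⟩ := ChainComplex.nonempty_homotopy_id_zero_of_acyclic (hS.acyclic_X₃ hqis)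
  let σ (n : ℕ) :=
    have hSn := hS.map_of_exact (HomologicalComplex.eval _ _ n)
    ShortComplex.Splitting.ofExactOfRetraction _ hSn.exact (r n) (f_r n) hSn.epi_g
  let e := HomotopyEquiv.ofDegreewiseSplit (cokernel.condition f) f_r (fun n => (σ n).s_g)
    (fun n => (σ n).r_f) H
  exact ⟨e.inv, ⟨e.homotopyHomInvId⟩, ⟨e.homotopyInvHomId⟩⟩
end

section
/- In Ch_{\geq 0}(R) (or in Ch(R)), if a chain map j is a cofibration in the mixed model structure and is also a quasi-isomorphism, then j is a chain homotopy equivalence. -/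
/-!
Factor `j` as `A ⟶ A ⊞ D ⟶ X`, where `D` is the contractible complex `⊕_{m ≥ 1} D^m(X_m)` of
disks on the modules of `X`, and `D ⟶ X` sends `(h, y) ∈ X_{n+1} × X_n` to `dh + y`, which is split
surjective in positive degrees.
The inclusion `A ⟶ A ⊞ D` is a homotopy equivalence, so by two-out-of-three `A ⊞ D ⟶ X` is an
acyclic mixed fibration. Lifting in the square `(A ⟶ A ⊞ D, j, A ⊞ D ⟶ X, 𝟙 X)` exhibits `j` as a
retract of a homotopy equivalence, whence a homotopy inverse of `j`.
-/

open CategoryTheory CategoryTheory.Limits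

universe u

lemma isChainHomotopyEquiv_hom {R : Type u} [Ring R] {X Y : ChainComplex (ModuleCat.{u} R) ℕ}
    (e : HomotopyEquiv X Y) : IsChainHomotopyEquiv e.hom :=
  ⟨e.inv, ⟨e.homotopyHomInvId⟩, ⟨e.homotopyInvHomId⟩⟩

section Preadditive

variable {ι V : Type*} [Category V] [Preadditive V] {c : ComplexShape ι}

noncomputable def HomotopyEquiv.ofHasLiftingProperty {A P X : HomologicalComplex V c}
    (e : HomotopyEquiv A P) {j : A ⟶ X} {p : P ⟶ X} (fac : e.hom ≫ p = j)
    [HasLiftingProperty j p] : HomotopyEquiv A X :=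
  have sq : CommSq e.hom j p (𝟙 X) := ⟨by rw [fac, Category.comp_id]⟩
  { hom := j
    inv := sq.lift ≫ e.inv
    homotopyHomInvId := (Homotopy.ofEq (by rw [sq.fac_left_assoc])).trans e.homotopyHomInvId
    homotopyInvHomId :=
      (Homotopy.ofEq (by simp only [Category.assoc, fac])).trans
        (((e.homotopyInvHomId.compRight p).compLeft sq.lift).trans
          (Homotopy.ofEq (by rw [Category.id_comp, sq.fac_right]))) }

noncomputable def HomotopyEquiv.biprodInl (A : HomologicalComplex V c)
    {D : HomologicalComplex V c} [HasBinaryBiproduct A D] (h : Homotopy (𝟙 D) 0) :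
    HomotopyEquiv A (A ⊞ D) where
  hom := biprod.inl
  inv := biprod.fst
  homotopyHomInvId := Homotopy.ofEq biprod.inl_fst
  homotopyInvHomId :=
    (Homotopy.ofEq (by simp)).trans
      ((((h.compRight biprod.inr).compLeft biprod.snd).add
        (Homotopy.refl (biprod.fst ≫ biprod.inl))).symm.trans
          (Homotopy.ofEq (by rw [Category.id_comp, add_comm, biprod.total])))

instance HomologicalComplex.isSplitEpi_biprod_desc_f {A D X : HomologicalComplex V c}
    [HasBinaryBiproduct A D] (j : A ⟶ X) (q : D ⟶ X) (n : ι) [IsSplitEpi (q.f n)] :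
    IsSplitEpi ((biprod.desc j q).f n) :=
  IsSplitEpi.mk' ⟨section_ (q.f n) ≫ (biprod.inr : D ⟶ A ⊞ D).f n, by
    rw [Category.assoc, ← HomologicalComplex.comp_f, biprod.inr_desc, IsSplitEpi.id]⟩

end Preadditive

@[simp]
lemma HomologicalComplex.d_comp_d_apply {R : Type u} [Ring R] {ι : Type*} {c : ComplexShape ι}
    (C : HomologicalComplex (ModuleCat.{u} R) c) (i j k : ι) (x : C.X i) :
    C.d j k (C.d i j x) = 0 := by
  rw [← ModuleCat.comp_apply, C.d_comp_d]
  rfl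

namespace ChainComplex

variable {R : Type u} [Ring R] (X : ChainComplex (ModuleCat.{u} R) ℕ)

/-- The disk `D^m(X_m)` contributes `X_m` in degrees `m` and `m - 1`, so in degree `n` the sum of
the disks on `X_1, X_2, …` is `X_{n+1} × X_n`, except in degree `0` where it is `X_1`. -/
abbrev sumDisksX : ℕ → ModuleCat.{u} R
  | 0 => X.X 1
  | n + 1 => ModuleCat.of R (X.X (n + 2) × X.X (n + 1))

def sumDisksD : ∀ n, sumDisksX X (n + 1) ⟶ sumDisksX X n
  | 0 => ModuleCat.ofHom (LinearMap.snd R _ _)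
  | _ + 1 => ModuleCat.ofHom (LinearMap.inl R _ _ ∘ₗ LinearMap.snd R _ _)

lemma sumDisksD_comp_sumDisksD : ∀ n, sumDisksD X (n + 1) ≫ sumDisksD X n = 0
  | 0 | _ + 1 => ModuleCat.hom_ext (LinearMap.ext fun _ => rfl)

noncomputable abbrev sumDisks : ChainComplex (ModuleCat.{u} R) ℕ :=
  of (sumDisksX X) (sumDisksD X) (sumDisksD_comp_sumDisksD X)

lemma sumDisks_d (n : ℕ) : (sumDisks X).d (n + 1) n = sumDisksD X n := of_d _ _ n

def sumDisksContractionf : ∀ n, sumDisksX X n ⟶ sumDisksX X (n + 1)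
  | 0 => ModuleCat.ofHom (LinearMap.inr R _ _)
  | _ + 1 => ModuleCat.ofHom (LinearMap.inr R _ _ ∘ₗ LinearMap.fst R _ _)

lemma sumDisksD_comp_sumDisksContractionf_add (n : ℕ) :
    sumDisksD X n ≫ sumDisksContractionf X n +
      sumDisksContractionf X (n + 1) ≫ sumDisksD X (n + 1) = 𝟙 _ := by
  cases n <;>
    exact ModuleCat.hom_ext (LinearMap.ext fun ⟨h, y⟩ => by
      simp [sumDisksContractionf, sumDisksD])

lemma sumDisks_id_eq_nullHomotopicMap : 𝟙 (sumDisks X) = Homotopy.nullHomotopicMap'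
    fun i _ hij => sumDisksContractionf X i ≫ eqToHom (congrArg (sumDisks X).X hij) := by
  ext1 n
  cases n with
  | zero =>
    rw [Homotopy.nullHomotopicMap'_f_of_not_rel_left rfl Nat.succ_ne_zero, sumDisks_d,
      eqToHom_refl, Category.comp_id]
    rfl
  | succ n =>
    rw [Homotopy.nullHomotopicMap'_f rfl rfl, sumDisks_d, sumDisks_d, eqToHom_refl,
      eqToHom_refl, Category.comp_id, Category.comp_id]
    exact (sumDisksD_comp_sumDisksContractionf_add X n).symm

noncomputable def sumDisksContraction : Homotopy (𝟙 (sumDisks X)) 0 :=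
  (Homotopy.ofEq (sumDisks_id_eq_nullHomotopicMap X)).trans (Homotopy.nullHomotopy' _)

def sumDisksπf : ∀ n, sumDisksX X n ⟶ X.X n
  | 0 => X.d 1 0
  | n + 1 => ModuleCat.ofHom ((X.d (n + 1 + 1) (n + 1)).hom ∘ₗ LinearMap.fst R _ _ +
      LinearMap.snd R _ _)

noncomputable def sumDisksπ : sumDisks X ⟶ X where
  f := sumDisksπf X
  comm' := by
    rintro _ n rfl
    rw [sumDisks_d]
    cases n <;>
      exact ModuleCat.hom_ext (LinearMap.ext fun ⟨h, y⟩ => by simp [sumDisksπf, sumDisksD])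

instance sumDisksπ_f_succ_isSplitEpi (n : ℕ) : IsSplitEpi ((sumDisksπ X).f (n + 1)) :=
  IsSplitEpi.mk' ⟨ModuleCat.ofHom (LinearMap.inr R _ _), by ext; simp [sumDisksπ, sumDisksπf]⟩

end ChainComplex

/-- In `Ch_{≥0}(R)`, if a chain map `j` is a cofibration in the mixed model
structure (it has the left lifting property with respect to every map that is
a degreewise split epimorphism in positive degrees and a quasi-isomorphism)
and `j` is a quasi-isomorphism, then `j` is a chain homotopy equivalence. -/
theorem mixed_trivial_cofibration_is_chain_homotopy_equivalence
    {R : Type u} [Ring R] {A X : ChainComplex (ModuleCat.{u} R) ℕ} (j : A ⟶ X)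
    (hcof : ∀ {E B : ChainComplex (ModuleCat.{u} R) ℕ} (p : E ⟶ B),
      (∀ n : ℕ, 0 < n → ∃ s : B.X n ⟶ E.X n, s ≫ p.f n = 𝟙 (B.X n)) →
      QuasiIso p → HasLiftingProperty j p)
    (hqis : QuasiIso j) :
    IsChainHomotopyEquiv j := by
  let e := HomotopyEquiv.biprodInl A X.sumDisksContraction
  let p : A ⊞ X.sumDisks ⟶ X := biprod.desc j X.sumDisksπ
  have fac : e.hom ≫ p = j := biprod.inl_desc _ _
  have hp : QuasiIso p := by
    have : QuasiIso (e.hom ≫ p) := fac ▸ hqis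
    exact quasiIso_of_comp_left e.hom p
  have hsplit (n : ℕ) (hn : 0 < n) : ∃ s, s ≫ p.f n = 𝟙 (X.X n) := by
    obtain ⟨m, rfl⟩ := Nat.exists_eq_add_one_of_ne_zero hn.ne'
    exact ⟨section_ _, IsSplitEpi.id _⟩
  have := hcof p hsplit hp
  exact isChainHomotopyEquiv_hom (HomotopyEquiv.ofHasLiftingProperty e fac)
end
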